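/- arXiv:2503.14165 — 2 statements merged into one kernel-verified Lean document; each statement's English description precedes it below -/
import Mathlib

section
/- Let A = (A0, A1, d, ·) be a strict pre-Lie 2-algebra and let ((ρ0,ρ1),(μ0,μ1)) be a strict representation of A on a two-term complex ∂ : V1 → V0. Consider the dual complex ∂ᵀ : V0* → V1* (degree 0 part V1*, degree −1 part V0*, where ⟨∂ᵀξ, m⟩ = ⟨ξ, ∂m⟩). Define: for x ∈ A0, ρ̂0(x) on V1* and on V0* by ⟨ρ̂0(x)ξ, v⟩ = −⟨ξ, (ρ0(x) − μ0(x))v⟩; for a ∈ A1, ρ̂1(a) : V1* → V0* by ⟨ρ̂1(a)η, v⟩ = −⟨η, (ρ1(a) − μ1(a))v⟩ for v ∈ V0; μ̂0(x) on V1* and on V0* by ⟨μ̂0(x)ξ, v⟩ = ⟨ξ, μ0(x)v⟩; μ̂1(a) : V1* → V0* by ⟨μ̂1(a)η, v⟩ = ⟨η, μ1(a)v⟩ for v ∈ V0. Then ((ρ̂0, ρ̂1), (μ̂0, μ̂1)) is a strict representation of A on the complex ∂ᵀ : V0* → V1*. -/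
namespace PreLie2

open Module TensorProduct

variable (K : Type*) [Field K]

/-- A two-argument map between modules is bilinear. -/
def IsBilin {M N P : Type*} [AddCommGroup M] [Module K M] [AddCommGroup N] [Module K N]
    [AddCommGroup P] [Module K P] (f : M → N → P) : Prop :=
  (∀ m, IsLinearMap K (f m)) ∧ ∀ n, IsLinearMap K fun m => f m n

section TwoTerm

variable {A0 A1 : Type*} [AddCommGroup A0] [Module K A0] [AddCommGroup A1] [Module K A1]

/-- A strict pre-Lie `2`-algebra structure on the two-term complex `d : A1 → A0`. -/
structure IsStrictPreLie2 (d : A1 → A0) (m00 : A0 → A0 → A0)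
    (m01 : A0 → A1 → A1) (m10 : A1 → A0 → A1) : Prop where
  d_lin : IsLinearMap K d
  m00_bilin : IsBilin K m00
  m01_bilin : IsBilin K m01
  m10_bilin : IsBilin K m10
  d_m01 : ∀ x a, d (m01 x a) = m00 x (d a)
  d_m10 : ∀ a x, d (m10 a x) = m00 (d a) x
  d_mix : ∀ a b, m01 (d a) b = m10 a (d b)
  preLie0 : ∀ x y z, m00 x (m00 y z) - m00 (m00 x y) z = m00 y (m00 x z) - m00 (m00 y x) z
  preLie1 : ∀ x y a, m01 x (m01 y a) - m01 (m00 x y) a = m01 y (m01 x a) - m01 (m00 y x) a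
  preLie2 : ∀ a x y, m10 a (m00 x y) - m10 (m10 a x) y = m01 x (m10 a y) - m10 (m01 x a) y

/-- A strict Lie `2`-algebra structure on the two-term complex `δ : A1 → A0`. -/
structure IsStrictLie2 (δ : A1 → A0) (br0 : A0 → A0 → A0) (br1 : A0 → A1 → A1) : Prop where
  δ_lin : IsLinearMap K δ
  br0_bilin : IsBilin K br0
  br1_bilin : IsBilin K br1
  skew : ∀ x y, br0 x y = -br0 y x
  δ_br1 : ∀ x a, δ (br1 x a) = br0 x (δ a)
  br1_δ : ∀ a b, br1 (δ a) b = -br1 (δ b) a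
  jacobi0 : ∀ x y z, br0 (br0 x y) z + br0 (br0 y z) x + br0 (br0 z x) y = 0
  jacobi1 : ∀ x y b, br1 x (br1 y b) - br1 y (br1 x b) - br1 (br0 x y) b = 0

/-- A strict associative `2`-algebra structure on the two-term complex `d : A1 → A0`. -/
structure IsStrictAssoc2 (d : A1 → A0) (m00 : A0 → A0 → A0)
    (m01 : A0 → A1 → A1) (m10 : A1 → A0 → A1) : Prop where
  d_lin : IsLinearMap K d
  m00_bilin : IsBilin K m00
  m01_bilin : IsBilin K m01
  m10_bilin : IsBilin K m10
  d_m01 : ∀ x a, d (m01 x a) = m00 x (d a)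
  d_m10 : ∀ a x, d (m10 a x) = m00 (d a) x
  d_mix : ∀ a b, m01 (d a) b = m10 a (d b)
  assoc000 : ∀ x y z, m00 x (m00 y z) = m00 (m00 x y) z
  assoc001 : ∀ x y a, m01 x (m01 y a) = m01 (m00 x y) a
  assoc010 : ∀ x a y, m01 x (m10 a y) = m10 (m01 x a) y
  assoc100 : ∀ a x y, m10 a (m00 x y) = m10 (m10 a x) y

end TwoTerm

/-- A pre-Lie algebra structure. -/
structure IsPreLie {B : Type*} [AddCommGroup B] [Module K B] (mul : B → B → B) : Prop where
  bilin : IsBilin K mul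
  preLie : ∀ x y z, mul (mul x y) z - mul x (mul y z) = mul (mul y x) z - mul y (mul x z)

section Rep

variable {g0 g1 V0 V1 : Type*}
  [AddCommGroup g0] [Module K g0] [AddCommGroup g1] [Module K g1]
  [AddCommGroup V0] [Module K V0] [AddCommGroup V1] [Module K V1]

/-- A strict representation of a strict Lie 2-algebra `(g0, g1, δ, br0, br1)` on the
two-term complex `par : V1 → V0`. -/
structure IsStrictRepLie2 (δ : g1 → g0) (br0 : g0 → g0 → g0) (br1 : g0 → g1 → g1)
    (par : V1 → V0) (ρ00 : g0 → V0 → V0) (ρ01 : g0 → V1 → V1) (ρ1 : g1 → V0 → V1) : Prop where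
  ρ00_bilin : IsBilin K ρ00
  ρ01_bilin : IsBilin K ρ01
  ρ1_bilin : IsBilin K ρ1
  chain : ∀ x m, ρ00 x (par m) = par (ρ01 x m)
  comp0 : ∀ a v, ρ00 (δ a) v = par (ρ1 a v)
  comp1 : ∀ a m, ρ01 (δ a) m = ρ1 a (par m)
  rep00 : ∀ x y v, ρ00 (br0 x y) v = ρ00 x (ρ00 y v) - ρ00 y (ρ00 x v)
  rep01 : ∀ x y m, ρ01 (br0 x y) m = ρ01 x (ρ01 y m) - ρ01 y (ρ01 x m)
  rep1 : ∀ x a v, ρ1 (br1 x a) v = ρ01 x (ρ1 a v) - ρ1 a (ρ00 x v)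

/-- A strict representation of a strict pre-Lie 2-algebra `(g0, g1, d, m00, m01, m10)` on the
two-term complex `par : V1 → V0`. -/
structure IsStrictRepPreLie2 (d : g1 → g0) (m00 : g0 → g0 → g0) (m01 : g0 → g1 → g1)
    (m10 : g1 → g0 → g1) (par : V1 → V0)
    (ρ00 : g0 → V0 → V0) (ρ01 : g0 → V1 → V1) (ρ1 : g1 → V0 → V1)
    (μ00 : g0 → V0 → V0) (μ01 : g0 → V1 → V1) (μ1 : g1 → V0 → V1) : Prop where
  toRepLie : IsStrictRepLie2 K d (fun x y => m00 x y - m00 y x)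
    (fun x a => m01 x a - m10 a x) par ρ00 ρ01 ρ1
  μ00_bilin : IsBilin K μ00
  μ01_bilin : IsBilin K μ01
  μ1_bilin : IsBilin K μ1
  μchain : ∀ x m, μ00 x (par m) = par (μ01 x m)
  μcomp0 : ∀ a v, μ00 (d a) v = par (μ1 a v)
  μcomp1 : ∀ a m, μ01 (d a) m = μ1 a (par m)
  eqA0 : ∀ x y v, μ00 (m00 x y) v + μ00 y (ρ00 x v) - ρ00 x (μ00 y v) - μ00 y (μ00 x v) = 0
  eqA1 : ∀ x y m, μ01 (m00 x y) m + μ01 y (ρ01 x m) - ρ01 x (μ01 y m) - μ01 y (μ01 x m) = 0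
  eqB : ∀ x a v, μ1 (m01 x a) v - ρ01 x (μ1 a v) + μ1 a (ρ00 x v) - μ1 a (μ00 x v) = 0
  eqC : ∀ a x v, μ1 (m10 a x) v - ρ1 a (μ00 x v) + μ01 x (ρ1 a v) - μ01 x (μ1 a v) = 0

/-- An `O`-operator on a strict Lie 2-algebra associated to a strict representation. -/
structure IsOOperator (δ : g1 → g0) (br0 : g0 → g0 → g0) (br1 : g0 → g1 → g1)
    (par : V1 → V0) (ρ00 : g0 → V0 → V0) (ρ01 : g0 → V1 → V1) (ρ1 : g1 → V0 → V1)
    (T0 : V0 → g0) (T1 : V1 → g1) : Prop where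
  T0_lin : IsLinearMap K T0
  T1_lin : IsLinearMap K T1
  chain : ∀ m, T0 (par m) = δ (T1 m)
  eq0 : ∀ u v, T0 (ρ00 (T0 u) v - ρ00 (T0 v) u) = br0 (T0 u) (T0 v)
  eq1 : ∀ m v, T1 (ρ1 (T1 m) v - ρ01 (T0 v) m) = -br1 (T0 v) (T1 m)

end Rep

section Matched

variable {g0 g1 h0 h1 : Type*}
  [AddCommGroup g0] [Module K g0] [AddCommGroup g1] [Module K g1]
  [AddCommGroup h0] [Module K h0] [AddCommGroup h1] [Module K h1]

/-- A matched pair of strict Lie 2-algebras. -/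
structure IsMatchedPairLie2
    (δ : g1 → g0) (br0 : g0 → g0 → g0) (br1 : g0 → g1 → g1)
    (δ' : h1 → h0) (br0' : h0 → h0 → h0) (br1' : h0 → h1 → h1)
    (ν00 : g0 → h0 → h0) (ν01 : g0 → h1 → h1) (ν1 : g1 → h0 → h1)
    (ν00' : h0 → g0 → g0) (ν01' : h0 → g1 → g1) (ν1' : h1 → g0 → g1) : Prop where
  lie : IsStrictLie2 K δ br0 br1
  lie' : IsStrictLie2 K δ' br0' br1'
  rep : IsStrictRepLie2 K δ br0 br1 δ' ν00 ν01 ν1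
  rep' : IsStrictRepLie2 K δ' br0' br1' δ ν00' ν01' ν1'
  eqL1 : ∀ x' x y, ν00' x' (br0 x y) =
      br0 x (ν00' x' y) + br0 (ν00' x' x) y + ν00' (ν00 y x') x - ν00' (ν00 x x') y
  eqL2 : ∀ x x' y', ν00 x (br0' x' y') =
      br0' x' (ν00 x y') + br0' (ν00 x x') y' + ν00 (ν00' y' x) x' - ν00 (ν00' x' x) y'
  eqL3 : ∀ h' x y, ν1' h' (br0 x y) =
      br1 x (ν1' h' y) - br1 y (ν1' h' x) + ν1' (ν01 y h') x - ν1' (ν01 x h') y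
  eqL4 : ∀ h x' y', ν1 h (br0' x' y') =
      br1' x' (ν1 h y') - br1' y' (ν1 h x') + ν1 (ν01' y' h) x' - ν1 (ν01' x' h) y'
  eqL5 : ∀ x' x h, ν01' x' (br1 x h) =
      br1 x (ν01' x' h) + br1 (ν00' x' x) h + ν1' (ν1 h x') x - ν01' (ν00 x x') h
  eqL6 : ∀ x x' h', ν01 x (br1' x' h') =
      br1' x' (ν01 x h') + br1' (ν00 x x') h' + ν1 (ν1' h' x) x' - ν01 (ν00' x' x) h'

/-- A matched pair of strict pre-Lie 2-algebras. -/
structure IsMatchedPairPreLie2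
    (d : g1 → g0) (m00 : g0 → g0 → g0) (m01 : g0 → g1 → g1) (m10 : g1 → g0 → g1)
    (d' : h1 → h0) (n00 : h0 → h0 → h0) (n01 : h0 → h1 → h1) (n10 : h1 → h0 → h1)
    (ρ00 : g0 → h0 → h0) (ρ01 : g0 → h1 → h1) (ρ1 : g1 → h0 → h1)
    (μ00 : g0 → h0 → h0) (μ01 : g0 → h1 → h1) (μ1 : g1 → h0 → h1)
    (ρ00' : h0 → g0 → g0) (ρ01' : h0 → g1 → g1) (ρ1' : h1 → g0 → g1)
    (μ00' : h0 → g0 → g0) (μ01' : h0 → g1 → g1) (μ1' : h1 → g0 → g1) : Prop where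
  alg : IsStrictPreLie2 K d m00 m01 m10
  alg' : IsStrictPreLie2 K d' n00 n01 n10
  rep : IsStrictRepPreLie2 K d m00 m01 m10 d' ρ00 ρ01 ρ1 μ00 μ01 μ1
  rep' : IsStrictRepPreLie2 K d' n00 n01 n10 d ρ00' ρ01' ρ1' μ00' μ01' μ1'
  eqM1 : ∀ a' x y, μ1' a' (m00 x y - m00 y x) =
      m01 x (μ1' a' y) - m01 y (μ1' a' x) + μ1' (ρ01 y a') x - μ1' (ρ01 x a') y
  eqM2 : ∀ a x' y', μ1 a (n00 x' y' - n00 y' x') =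
      n01 x' (μ1 a y') - n01 y' (μ1 a x') + μ1 (ρ01' y' a) x' - μ1 (ρ01' x' a) y'
  eqM3 : ∀ z' x y, μ00' z' (m00 x y - m00 y x) =
      m00 x (μ00' z' y) - m00 y (μ00' z' x) + μ00' (ρ00 y z') x - μ00' (ρ00 x z') y
  eqM4 : ∀ z x' y', μ00 z (n00 x' y' - n00 y' x') =
      n00 x' (μ00 z y') - n00 y' (μ00 z x') + μ00 (ρ00' y' z) x' - μ00 (ρ00' x' z) y'
  eqM5 : ∀ y' x a, μ01' y' (m01 x a - m10 a x) =
      m01 x (μ01' y' a) - m10 a (μ00' y' x) + μ1' (ρ1 a y') x - μ01' (ρ00 x y') a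
  eqM6 : ∀ y x' a', μ01 y (n01 x' a' - n10 a' x') =
      n01 x' (μ01 y a') - n10 a' (μ00 y x') + μ1 (ρ1' a' y) x' - μ01 (ρ00' x' y) a'
  eqM7 : ∀ x y' a', ρ01 x (n01 y' a') =
      n01 (ρ00 x y' - μ00 x y') a' + ρ01 (μ00' y' x - ρ00' y' x) a'
        + n01 y' (ρ01 x a') + μ1 (μ1' a' x) y'
  eqM8 : ∀ x' y a, ρ01' x' (m01 y a) =
      m01 (ρ00' x' y - μ00' x' y) a + ρ01' (μ00 y x' - ρ00 y x') a
        + m01 y (ρ01' x' a) + μ1' (μ1 a x') y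
  eqM9 : ∀ x a' y', ρ01 x (n10 a' y') =
      n10 (ρ01 x a' - μ01 x a') y' + ρ1 (μ1' a' x - ρ1' a' x) y'
        + n10 a' (ρ00 x y') + μ01 (μ00' y' x) a'
  eqM10 : ∀ x' a y, ρ01' x' (m10 a y) =
      m10 (ρ01' x' a - μ01' x' a) y + ρ1' (μ1 a x' - ρ1 a x') y
        + m10 a (ρ00' x' y) + μ01' (μ00 y x') a
  eqM11 : ∀ a x' y', ρ1 a (n00 x' y') =
      n10 (ρ1 a x' - μ1 a x') y' + ρ1 (μ01' x' a - ρ01' x' a) y'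
        + n01 x' (ρ1 a y') + μ1 (μ01' y' a) x'
  eqM12 : ∀ a' x y, ρ1' a' (m00 x y) =
      m10 (ρ1' a' x - μ1' a' x) y + ρ1' (μ01 x a' - ρ01 x a') y
        + m01 x (ρ1' a' y) + μ1' (μ01 y a') x
  eqM13 : ∀ x y' z', ρ00 x (n00 y' z') =
      n00 (ρ00 x y' - μ00 x y') z' + ρ00 (μ00' y' x - ρ00' y' x) z'
        + n00 y' (ρ00 x z') + μ00 (μ00' z' x) y'
  eqM14 : ∀ x' y z, ρ00' x' (m00 y z) =
      m00 (ρ00' x' y - μ00' x' y) z + ρ00' (μ00 y x' - ρ00 y x') z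
        + m00 y (ρ00' x' z) + μ00' (μ00 z x') y

end Matched

end PreLie2

open PreLie2 Module

/-! The difference `ρ - μ` of a representation of a pre-Lie 2-algebra is a representation of
the subadjacent Lie 2-algebra: in `ρ(x·y - y·x) - μ(x·y - y·x)` the compatibility conditions
for `μ` cancel all cross terms. The negative transpose of a strict Lie 2-algebra representation
is a representation on the dual complex, which gives `ρ̂`. Finally, since transposition reverses
composition and `ρ̂ = -(ρ - μ)ᵀ`, each compatibility condition between `ρ̂` and `μ̂ = μᵀ` is
the transpose of the corresponding one between `ρ` and `μ`. -/

namespace PreLie2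

variable {K : Type*} [Field K]

section Bilin

variable {A M N P : Type*} [AddCommGroup A] [Module K A] [AddCommGroup M] [Module K M]
  [AddCommGroup N] [Module K N] [AddCommGroup P] [Module K P]

theorem IsBilin.neg {f : M → N → P} (hf : IsBilin K f) : IsBilin K fun m n => -f m n :=
  ⟨fun m => (-IsLinearMap.mk' _ (hf.1 m)).isLinear,
    fun n => (-IsLinearMap.mk' _ (hf.2 n)).isLinear⟩

theorem isBilin_apply (f : A →ₗ[K] M →ₗ[K] N) : IsBilin K fun x m => f x m :=
  ⟨fun x => (f x).isLinear, fun m => (f.flip m).isLinear⟩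

theorem isBilin_comp_apply (f : A →ₗ[K] M →ₗ[K] N) :
    IsBilin K fun x (η : N →ₗ[K] P) => η ∘ₗ f x :=
  isBilin_apply ((LinearMap.llcomp K M N P).flip ∘ₗ f)

end Bilin

section Rep

variable {g0 g1 V0 V1 W : Type*}
  [AddCommGroup g0] [Module K g0] [AddCommGroup g1] [Module K g1]
  [AddCommGroup V0] [Module K V0] [AddCommGroup V1] [Module K V1] [AddCommGroup W] [Module K W]

theorem IsStrictRepLie2.dual {δ : g1 → g0} {br0 : g0 → g0 → g0} {br1 : g0 → g1 → g1}
    {par : V1 →ₗ[K] V0} {ρ00 : g0 →ₗ[K] V0 →ₗ[K] V0} {ρ01 : g0 →ₗ[K] V1 →ₗ[K] V1}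
    {ρ1 : g1 →ₗ[K] V0 →ₗ[K] V1}
    (h : IsStrictRepLie2 K δ br0 br1 par (fun x v => ρ00 x v) (fun x m => ρ01 x m)
      (fun a v => ρ1 a v)) :
    IsStrictRepLie2 K δ br0 br1 (fun ξ : V0 →ₗ[K] W => ξ ∘ₗ par)
      (fun x (η : V1 →ₗ[K] W) => -(η ∘ₗ ρ01 x)) (fun x (ξ : V0 →ₗ[K] W) => -(ξ ∘ₗ ρ00 x))
      (fun a (η : V1 →ₗ[K] W) => -(η ∘ₗ ρ1 a)) where
  ρ00_bilin := (isBilin_comp_apply ρ01).neg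
  ρ01_bilin := (isBilin_comp_apply ρ00).neg
  ρ1_bilin := (isBilin_comp_apply ρ1).neg
  chain x ξ := by ext m; simp [h.chain]
  comp0 a η := by ext v; simp [h.comp1]
  comp1 a ξ := by ext v; simp [h.comp0]
  rep00 x y η := by ext m; simp [h.rep01]
  rep01 x y ξ := by ext v; simp [h.rep00]
  rep1 x a η := by ext v; simp [h.rep1]

theorem IsStrictRepPreLie2.isStrictRepLie2_sub {d : g1 → g0} {m00 : g0 → g0 → g0}
    {m01 : g0 → g1 → g1} {m10 : g1 → g0 → g1} {par : V1 →ₗ[K] V0}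
    {ρ00 μ00 : g0 →ₗ[K] V0 →ₗ[K] V0} {ρ01 μ01 : g0 →ₗ[K] V1 →ₗ[K] V1}
    {ρ1 μ1 : g1 →ₗ[K] V0 →ₗ[K] V1}
    (h : IsStrictRepPreLie2 K d m00 m01 m10 par (fun x v => ρ00 x v) (fun x m => ρ01 x m)
      (fun a v => ρ1 a v) (fun x v => μ00 x v) (fun x m => μ01 x m) (fun a v => μ1 a v)) :
    IsStrictRepLie2 K d (fun x y => m00 x y - m00 y x) (fun x a => m01 x a - m10 a x) par
      (fun x v => (ρ00 - μ00) x v) (fun x m => (ρ01 - μ01) x m) (fun a v => (ρ1 - μ1) a v) where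
  ρ00_bilin := isBilin_apply _
  ρ01_bilin := isBilin_apply _
  ρ1_bilin := isBilin_apply _
  chain x m := by simp [h.toRepLie.chain, h.μchain]
  comp0 a v := by simp [h.toRepLie.comp0, h.μcomp0]
  comp1 a m := by simp [h.toRepLie.comp1, h.μcomp1]
  rep00 x y v := by
    have hρ := h.toRepLie.rep00 x y v
    simp only [LinearMap.sub_apply, map_sub] at hρ ⊢
    linear_combination (norm := module) hρ - h.eqA0 x y v + h.eqA0 y x v
  rep01 x y m := by
    have hρ := h.toRepLie.rep01 x y m
    simp only [LinearMap.sub_apply, map_sub] at hρ ⊢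
    linear_combination (norm := module) hρ - h.eqA1 x y m + h.eqA1 y x m
  rep1 x a v := by
    have hρ := h.toRepLie.rep1 x a v
    simp only [LinearMap.sub_apply, map_sub] at hρ ⊢
    linear_combination (norm := module) hρ - h.eqB x a v + h.eqC a x v

theorem IsStrictRepPreLie2.dual {d : g1 → g0} {m00 : g0 → g0 → g0}
    {m01 : g0 → g1 → g1} {m10 : g1 → g0 → g1} {par : V1 →ₗ[K] V0}
    {ρ00 μ00 : g0 →ₗ[K] V0 →ₗ[K] V0} {ρ01 μ01 : g0 →ₗ[K] V1 →ₗ[K] V1}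
    {ρ1 μ1 : g1 →ₗ[K] V0 →ₗ[K] V1}
    (h : IsStrictRepPreLie2 K d m00 m01 m10 par (fun x v => ρ00 x v) (fun x m => ρ01 x m)
      (fun a v => ρ1 a v) (fun x v => μ00 x v) (fun x m => μ01 x m) (fun a v => μ1 a v)) :
    IsStrictRepPreLie2 K d m00 m01 m10 (fun ξ : V0 →ₗ[K] W => ξ ∘ₗ par)
      (fun x (η : V1 →ₗ[K] W) => -(η ∘ₗ (ρ01 x - μ01 x)))
      (fun x (ξ : V0 →ₗ[K] W) => -(ξ ∘ₗ (ρ00 x - μ00 x)))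
      (fun a (η : V1 →ₗ[K] W) => -(η ∘ₗ (ρ1 a - μ1 a)))
      (fun x (η : V1 →ₗ[K] W) => η ∘ₗ μ01 x) (fun x (ξ : V0 →ₗ[K] W) => ξ ∘ₗ μ00 x)
      (fun a (η : V1 →ₗ[K] W) => η ∘ₗ μ1 a) := by
  refine ⟨h.isStrictRepLie2_sub.dual, isBilin_comp_apply μ01, isBilin_comp_apply μ00,
    isBilin_comp_apply μ1, fun x ξ => LinearMap.ext fun m => congrArg ξ (h.μchain x m).symm,
    fun a η => LinearMap.ext fun m => congrArg η (h.μcomp1 a m),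
    fun a ξ => LinearMap.ext fun v => congrArg ξ (h.μcomp0 a v),
    fun x y η => LinearMap.ext fun m => ?_, fun x y ξ => LinearMap.ext fun v => ?_,
    fun x a η => LinearMap.ext fun v => ?_, fun a x η => LinearMap.ext fun v => ?_⟩
  on_goal 1 => linear_combination (norm := skip) congrArg η (h.eqA1 x y m)
  on_goal 2 => linear_combination (norm := skip) congrArg ξ (h.eqA0 x y v)
  on_goal 3 => linear_combination (norm := skip) congrArg η (h.eqB x a v)
  on_goal 4 => linear_combination (norm := skip) congrArg η (h.eqC a x v)
  all_goals
    simp only [LinearMap.comp_apply, LinearMap.add_apply, LinearMap.sub_apply,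
      LinearMap.neg_apply, LinearMap.zero_apply, map_add, map_sub, map_zero]
    abel

end Rep

end PreLie2

theorem dual_rep_of_strict_preLie2_general
    {K : Type*} [Field K]
    {A0 A1 V0 V1 : Type*} [AddCommGroup A0] [Module K A0]
    [AddCommGroup A1] [Module K A1]
    [AddCommGroup V0] [Module K V0]
    [AddCommGroup V1] [Module K V1]
    (d : A1 →ₗ[K] A0) (m00 : A0 →ₗ[K] A0 →ₗ[K] A0) (m01 : A0 →ₗ[K] A1 →ₗ[K] A1)
    (m10 : A1 →ₗ[K] A0 →ₗ[K] A1)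
    (par : V1 →ₗ[K] V0)
    (ρ00 : A0 →ₗ[K] V0 →ₗ[K] V0) (ρ01 : A0 →ₗ[K] V1 →ₗ[K] V1) (ρ1 : A1 →ₗ[K] V0 →ₗ[K] V1)
    (μ00 : A0 →ₗ[K] V0 →ₗ[K] V0) (μ01 : A0 →ₗ[K] V1 →ₗ[K] V1) (μ1 : A1 →ₗ[K] V0 →ₗ[K] V1)
    (hrep : IsStrictRepPreLie2 K (⇑d) (fun x y => m00 x y) (fun x a => m01 x a)
      (fun a x => m10 a x) (⇑par)
      (fun x v => ρ00 x v) (fun x m => ρ01 x m) (fun a v => ρ1 a v)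
      (fun x v => μ00 x v) (fun x m => μ01 x m) (fun a v => μ1 a v)) :
    IsStrictRepPreLie2 K (⇑d) (fun x y => m00 x y) (fun x a => m01 x a) (fun a x => m10 a x)
      -- the dual complex `∂ᵀ : V0* → V1*`, `⟨∂ᵀξ, m⟩ = ⟨ξ, ∂m⟩`
      (fun ξ : Dual K V0 => ((ξ ∘ₗ par : Dual K V1)))
      -- `ρ̂0(x)` on `V1*` : `⟨ρ̂0(x)η, v⟩ = −⟨η, (ρ0(x) − μ0(x))v⟩`
      (fun (x : A0) (η : Dual K V1) => -(η ∘ₗ (ρ01 x - μ01 x)))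
      -- `ρ̂0(x)` on `V0*`
      (fun (x : A0) (ξ : Dual K V0) => -(ξ ∘ₗ (ρ00 x - μ00 x)))
      -- `ρ̂1(a) : V1* → V0*` : `⟨ρ̂1(a)η, v⟩ = −⟨η, (ρ1(a) − μ1(a))v⟩`
      (fun (a : A1) (η : Dual K V1) => -(η ∘ₗ (ρ1 a - μ1 a)))
      -- `μ̂0(x)` on `V1*` : `⟨μ̂0(x)η, v⟩ = ⟨η, μ0(x)v⟩`
      (fun (x : A0) (η : Dual K V1) => η ∘ₗ μ01 x)
      -- `μ̂0(x)` on `V0*`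
      (fun (x : A0) (ξ : Dual K V0) => ξ ∘ₗ μ00 x)
      -- `μ̂1(a) : V1* → V0*`
      (fun (a : A1) (η : Dual K V1) => η ∘ₗ μ1 a) :=
  hrep.dual

/-- the dual of a strict representation of a strict pre-Lie 2-algebra is again
a strict representation, on the dual complex `∂ᵀ : V0* → V1*`. -/
theorem dual_rep_of_strict_preLie2
    {K : Type*} [Field K] [CharZero K]
    {A0 A1 V0 V1 : Type*} [AddCommGroup A0] [Module K A0] [FiniteDimensional K A0]
    [AddCommGroup A1] [Module K A1] [FiniteDimensional K A1]
    [AddCommGroup V0] [Module K V0] [FiniteDimensional K V0]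
    [AddCommGroup V1] [Module K V1] [FiniteDimensional K V1]
    (d : A1 →ₗ[K] A0) (m00 : A0 →ₗ[K] A0 →ₗ[K] A0) (m01 : A0 →ₗ[K] A1 →ₗ[K] A1)
    (m10 : A1 →ₗ[K] A0 →ₗ[K] A1)
    (hA : IsStrictPreLie2 K (⇑d) (fun x y => m00 x y) (fun x a => m01 x a) (fun a x => m10 a x))
    (par : V1 →ₗ[K] V0)
    (ρ00 : A0 →ₗ[K] V0 →ₗ[K] V0) (ρ01 : A0 →ₗ[K] V1 →ₗ[K] V1) (ρ1 : A1 →ₗ[K] V0 →ₗ[K] V1)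
    (μ00 : A0 →ₗ[K] V0 →ₗ[K] V0) (μ01 : A0 →ₗ[K] V1 →ₗ[K] V1) (μ1 : A1 →ₗ[K] V0 →ₗ[K] V1)
    (hrep : IsStrictRepPreLie2 K (⇑d) (fun x y => m00 x y) (fun x a => m01 x a)
      (fun a x => m10 a x) (⇑par)
      (fun x v => ρ00 x v) (fun x m => ρ01 x m) (fun a v => ρ1 a v)
      (fun x v => μ00 x v) (fun x m => μ01 x m) (fun a v => μ1 a v)) :
    IsStrictRepPreLie2 K (⇑d) (fun x y => m00 x y) (fun x a => m01 x a) (fun a x => m10 a x)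
      -- the dual complex `∂ᵀ : V0* → V1*`, `⟨∂ᵀξ, m⟩ = ⟨ξ, ∂m⟩`
      (fun ξ : Dual K V0 => ((ξ ∘ₗ par : Dual K V1)))
      -- `ρ̂0(x)` on `V1*` : `⟨ρ̂0(x)η, v⟩ = −⟨η, (ρ0(x) − μ0(x))v⟩`
      (fun (x : A0) (η : Dual K V1) => -(η ∘ₗ (ρ01 x - μ01 x)))
      -- `ρ̂0(x)` on `V0*`
      (fun (x : A0) (ξ : Dual K V0) => -(ξ ∘ₗ (ρ00 x - μ00 x)))
      -- `ρ̂1(a) : V1* → V0*` : `⟨ρ̂1(a)η, v⟩ = −⟨η, (ρ1(a) − μ1(a))v⟩`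
      (fun (a : A1) (η : Dual K V1) => -(η ∘ₗ (ρ1 a - μ1 a)))
      -- `μ̂0(x)` on `V1*` : `⟨μ̂0(x)η, v⟩ = ⟨η, μ0(x)v⟩`
      (fun (x : A0) (η : Dual K V1) => η ∘ₗ μ01 x)
      -- `μ̂0(x)` on `V0*`
      (fun (x : A0) (ξ : Dual K V0) => ξ ∘ₗ μ00 x)
      -- `μ̂1(a) : V1* → V0*`
      (fun (a : A1) (η : Dual K V1) => η ∘ₗ μ1 a) :=
  dual_rep_of_strict_preLie2_general d m00 m01 m10 par ρ00 ρ01 ρ1 μ00 μ01 μ1 hrep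
end

section
/- Let (g0, g1, δ, [·,·]) be a strict Lie 2-algebra with a bilinear form ω : g0 × g1 → K whose induced maps g0 → g1* and g1 → g0* are bijective, satisfying ω([x,y], a) + ω(y, [x,a]) − ω(x, [y,a]) = 0 and ω(δa, b) + ω(δb, a) = 0 for all x,y ∈ g0, a,b ∈ g1. Suppose g0 = g0⁺ ⊕ g0⁻ and g1 = g1⁺ ⊕ g1⁻, where g⁺ = g0⁺ ⊕ g1⁺ and g⁻ = g0⁻ ⊕ g1⁻ are closed under δ and under the brackets and are Lagrangian: g⁺^⊥ = g⁺ and g⁻^⊥ = g⁻, where for a graded subspace U = U0 ⊕ U1 one sets U^⊥ = {x + a ∈ g0 ⊕ g1 : ω(x, b) = 0 for all b ∈ U1 and ω(y, a) = 0 for all y ∈ U0}. Suppose bilinear maps ∗ : g0 × g0 → g0, g0 × g1 → g1, g1 × g0 → g1 satisfy ω(x∗y, a) = −ω(y, [x,a]), ω(z, x∗b) = −ω([x,z], b), ω(z, a∗y) = −ω(y, [z,a]) for all x,y,z ∈ g0, a,b ∈ g1 (such maps exist uniquely by nondegeneracy). Then: (i) (g0, g1, δ, ∗) is a strict pre-Lie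 2-algebra whose subadjacent brackets recover [·,·], i.e. x∗y − y∗x = [x,y] and x∗a − a∗x = [x,a]; (ii) ω is a nondegenerate invariant degree-1 bilinear form on (g0, g1, δ, ∗); (iii) g⁺ and g⁻ are closed under ∗ and isotropic, so ((g, ∗, ω), g⁺, g⁻) is a Manin triple of strict pre-Lie 2-algebras. -/
/-!
The multiplications `∗` are `ω`-transposes of adjoint actions: `x ∗ ·` on `g0` is minus the
transpose of `[x, ·]` on `g1`, and `x ∗ ·` on `g1` is minus the transpose of `[x, ·]` on `g0`.
The transpose of a representation is a representation, which together with
`x ∗ y - y ∗ x = [x, y]` gives the pre-Lie identities; the other axioms are identities between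
pairings, hence equalities by nondegeneracy. For a Lagrangian `g⁺`, `ω (x ∗ y) b = -ω y [x, b]`
vanishes on `g⁺` by isotropy and bracket closure, so `x ∗ y ∈ (g⁺)^⊥ = g⁺`.
-/

namespace PreLie2

theorem isBilin_linearMap {K M N P : Type*} [Field K] [AddCommGroup M] [Module K M]
    [AddCommGroup N] [Module K N] [AddCommGroup P] [Module K P] (f : M →ₗ[K] N →ₗ[K] P) :
    IsBilin K fun m n => f m n :=
  ⟨fun m => (f m).isLinear, fun n => (f.flip n).isLinear⟩

theorem map_bracket_of_transpose {K L V W : Type*} [CommRing K] [AddCommGroup V] [Module K V]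
    [AddCommGroup W] [Module K W] {B : W →ₗ[K] V →ₗ[K] K} (hB : Function.Injective B)
    {bracket : L → L → L} {ρ : L → V → V} {σ : L → W → W}
    (hρ : ∀ x y v, ρ (bracket x y) v = ρ x (ρ y v) - ρ y (ρ x v))
    (hσ : ∀ x w v, B (σ x w) v = -B w (ρ x v)) (x y : L) (w : W) :
    σ (bracket x y) w = σ x (σ y w) - σ y (σ x w) := by
  refine hB (LinearMap.ext fun v => ?_)
  simp only [map_sub, LinearMap.sub_apply, hσ, hρ]
  ring

section Lie2

variable {K g0 g1 : Type*} [Field K] [AddCommGroup g0] [Module K g0]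
  [AddCommGroup g1] [Module K g1]
  {δ : g1 →ₗ[K] g0} {br0 : g0 →ₗ[K] g0 →ₗ[K] g0} {br1 : g0 →ₗ[K] g1 →ₗ[K] g1}

theorem IsStrictLie2.br0_br0 (hg : IsStrictLie2 K (⇑δ) (fun x y => br0 x y) (fun x a => br1 x a))
    (x y z : g0) : br0 (br0 x y) z = br0 x (br0 y z) - br0 y (br0 x z) := by
  have hyz : br0 (br0 y z) x = -br0 x (br0 y z) := hg.skew _ _
  have hzx : br0 (br0 z x) y = br0 y (br0 x z) := by
    rw [hg.skew z x, hg.skew, map_neg, neg_neg]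
  have j := hg.jacobi0 x y z
  rw [hyz, hzx] at j
  linear_combination (norm := module) j

theorem IsStrictLie2.br1_br1 (hg : IsStrictLie2 K (⇑δ) (fun x y => br0 x y) (fun x a => br1 x a))
    (x y : g0) (b : g1) : br1 (br0 x y) b = br1 x (br1 y b) - br1 y (br1 x b) :=
  (sub_eq_zero.mp (hg.jacobi1 x y b)).symm

end Lie2

section DualMultiplication

variable {K g0 g1 : Type*} [Field K] [AddCommGroup g0] [Module K g0]
  [AddCommGroup g1] [Module K g1]
  {δ : g1 →ₗ[K] g0} {br0 : g0 →ₗ[K] g0 →ₗ[K] g0} {br1 : g0 →ₗ[K] g1 →ₗ[K] g1}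
  {ω : g0 →ₗ[K] g1 →ₗ[K] K}
  {s00 : g0 →ₗ[K] g0 →ₗ[K] g0} {s01 : g0 →ₗ[K] g1 →ₗ[K] g1} {s10 : g1 →ₗ[K] g0 →ₗ[K] g1}

theorem s00_sub_s00_eq_br0 (hω : Function.Injective ω)
    (hinv : ∀ x y a, ω (br0 x y) a + ω y (br1 x a) - ω x (br1 y a) = 0)
    (hs00 : ∀ x y a, ω (s00 x y) a = -ω y (br1 x a)) (x y : g0) :
    s00 x y - s00 y x = br0 x y := by
  refine hω (LinearMap.ext fun a => ?_)
  simp only [map_sub, LinearMap.sub_apply]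
  linear_combination hs00 x y a - hs00 y x a - hinv x y a

theorem s01_sub_s10_eq_br1
    (hg : IsStrictLie2 K (⇑δ) (fun x y => br0 x y) (fun x a => br1 x a))
    (hω : Function.Injective ω.flip)
    (hinv : ∀ x y a, ω (br0 x y) a + ω y (br1 x a) - ω x (br1 y a) = 0)
    (hs01 : ∀ x z b, ω z (s01 x b) = -ω (br0 x z) b)
    (hs10 : ∀ a z y, ω z (s10 a y) = -ω y (br1 z a)) (x : g0) (a : g1) :
    s01 x a - s10 a x = br1 x a := by
  refine hω (LinearMap.ext fun z => ?_)
  have hskew : ω (br0 z x) a = -ω (br0 x z) a := by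
    rw [hg.skew z x, map_neg, LinearMap.neg_apply]
  simp only [map_sub, LinearMap.sub_apply, LinearMap.flip_apply]
  linear_combination hs01 x z a - hs10 a z x + hinv z x a - hskew

theorem δ_s01 (hg : IsStrictLie2 K (⇑δ) (fun x y => br0 x y) (fun x a => br1 x a))
    (hω : Function.Injective ω) (hδω : ∀ a b, ω (δ a) b + ω (δ b) a = 0)
    (hs00 : ∀ x y a, ω (s00 x y) a = -ω y (br1 x a))
    (hs01 : ∀ x z b, ω z (s01 x b) = -ω (br0 x z) b) (x : g0) (c : g1) :
    δ (s01 x c) = s00 x (δ c) := by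
  refine hω (LinearMap.ext fun b => ?_)
  have h := hδω c (br1 x b)
  rw [hg.δ_br1 x b] at h
  linear_combination hδω (s01 x c) b - hs01 x (δ b) c - hs00 x (δ c) b + h

theorem δ_s10 (hg : IsStrictLie2 K (⇑δ) (fun x y => br0 x y) (fun x a => br1 x a))
    (hω : Function.Injective ω) (hδω : ∀ a b, ω (δ a) b + ω (δ b) a = 0)
    (hs00 : ∀ x y a, ω (s00 x y) a = -ω y (br1 x a))
    (hs10 : ∀ a z y, ω z (s10 a y) = -ω y (br1 z a)) (c : g1) (x : g0) :
    δ (s10 c x) = s00 (δ c) x := by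
  refine hω (LinearMap.ext fun b => ?_)
  have h : ω x (br1 (δ c) b) = -ω x (br1 (δ b) c) := by rw [hg.br1_δ c b, map_neg]
  linear_combination hδω (s10 c x) b - hs10 c (δ b) x - hs00 (δ c) x b + h

theorem s01_δ_eq_s10_δ (hg : IsStrictLie2 K (⇑δ) (fun x y => br0 x y) (fun x a => br1 x a))
    (hω : Function.Injective ω.flip) (hδω : ∀ a b, ω (δ a) b + ω (δ b) a = 0)
    (hs01 : ∀ x z b, ω z (s01 x b) = -ω (br0 x z) b)
    (hs10 : ∀ a z y, ω z (s10 a y) = -ω y (br1 z a)) (c b : g1) :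
    s01 (δ c) b = s10 c (δ b) := by
  refine hω (LinearMap.ext fun z => ?_)
  have h := hδω (br1 z c) b
  rw [hg.δ_br1 z c] at h
  have hskew : ω (br0 z (δ c)) b = -ω (br0 (δ c) z) b := by
    rw [hg.skew z, map_neg, LinearMap.neg_apply]
  simp only [LinearMap.flip_apply]
  linear_combination hs01 (δ c) z b - hs10 c z (δ b) + h - hskew

theorem s00_br0 (hg : IsStrictLie2 K (⇑δ) (fun x y => br0 x y) (fun x a => br1 x a))
    (hω : Function.Injective ω) (hs00 : ∀ x y a, ω (s00 x y) a = -ω y (br1 x a)) (x y z : g0) :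
    s00 (br0 x y) z = s00 x (s00 y z) - s00 y (s00 x z) :=
  map_bracket_of_transpose (ρ := fun x => br1 x) (σ := fun x => s00 x) hω hg.br1_br1 hs00 x y z

theorem s01_br0 (hg : IsStrictLie2 K (⇑δ) (fun x y => br0 x y) (fun x a => br1 x a))
    (hω : Function.Injective ω.flip) (hs01 : ∀ x z b, ω z (s01 x b) = -ω (br0 x z) b)
    (x y : g0) (a : g1) : s01 (br0 x y) a = s01 x (s01 y a) - s01 y (s01 x a) :=
  map_bracket_of_transpose (ρ := fun x => br0 x) (σ := fun x => s01 x) hω hg.br0_br0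
    (fun x b z => hs01 x z b) x y a

theorem s01_s10_sub_s10_s00
    (hg : IsStrictLie2 K (⇑δ) (fun x y => br0 x y) (fun x a => br1 x a))
    (hω : Function.Injective ω.flip) (hs00 : ∀ x y a, ω (s00 x y) a = -ω y (br1 x a))
    (hs01 : ∀ x z b, ω z (s01 x b) = -ω (br0 x z) b)
    (hs10 : ∀ a z y, ω z (s10 a y) = -ω y (br1 z a)) (x y : g0) (a : g1) :
    s01 x (s10 a y) - s10 a (s00 x y) = s10 (br1 x a) y := by
  refine hω (LinearMap.ext fun z => ?_)
  have h := congrArg (ω y) (hg.br1_br1 x z a)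
  simp only [map_sub, LinearMap.sub_apply, LinearMap.flip_apply] at h ⊢
  linear_combination hs01 x z (s10 a y) - hs10 a (br0 x z) y - hs10 a z (s00 x y)
    + hs00 x y (br1 z a) - hs10 (br1 x a) z y + h

theorem isStrictPreLie2_of_transpose
    (hg : IsStrictLie2 K (⇑δ) (fun x y => br0 x y) (fun x a => br1 x a))
    (hω₀ : Function.Injective ω) (hω₁ : Function.Injective ω.flip)
    (hinv : ∀ x y a, ω (br0 x y) a + ω y (br1 x a) - ω x (br1 y a) = 0)
    (hδω : ∀ a b, ω (δ a) b + ω (δ b) a = 0)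
    (hs00 : ∀ x y a, ω (s00 x y) a = -ω y (br1 x a))
    (hs01 : ∀ x z b, ω z (s01 x b) = -ω (br0 x z) b)
    (hs10 : ∀ a z y, ω z (s10 a y) = -ω y (br1 z a)) :
    IsStrictPreLie2 K (⇑δ) (fun x y => s00 x y) (fun x a => s01 x a) (fun a x => s10 a x) where
  d_lin := δ.isLinear
  m00_bilin := isBilin_linearMap s00
  m01_bilin := isBilin_linearMap s01
  m10_bilin := isBilin_linearMap s10
  d_m01 := δ_s01 hg hω₀ hδω hs00 hs01
  d_m10 := δ_s10 hg hω₀ hδω hs00 hs10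
  d_mix := s01_δ_eq_s10_δ hg hω₁ hδω hs01 hs10
  preLie0 x y z := by
    have h := s00_br0 hg hω₀ hs00 x y z
    rw [← s00_sub_s00_eq_br0 hω₀ hinv hs00, map_sub, LinearMap.sub_apply] at h
    linear_combination (norm := module) -h
  preLie1 x y a := by
    have h := s01_br0 hg hω₁ hs01 x y a
    rw [← s00_sub_s00_eq_br0 hω₀ hinv hs00, map_sub, LinearMap.sub_apply] at h
    linear_combination (norm := module) -h
  preLie2 a x y := by
    have h := s01_s10_sub_s10_s00 hg hω₁ hs00 hs01 hs10 x y a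
    rw [← s01_sub_s10_eq_br1 hg hω₁ hinv hs01 hs10, map_sub, LinearMap.sub_apply] at h
    linear_combination (norm := module) -h

def IsLagrangian (ω : g0 →ₗ[K] g1 →ₗ[K] K) (U0 : Submodule K g0) (U1 : Submodule K g1) : Prop :=
  ∀ x a, ((∀ b ∈ U1, ω x b = 0) ∧ ∀ y ∈ U0, ω y a = 0) ↔ (x ∈ U0 ∧ a ∈ U1)

namespace IsLagrangian

variable {U0 : Submodule K g0} {U1 : Submodule K g1}

theorem isotropic (hU : IsLagrangian ω U0 U1) {x : g0} (hx : x ∈ U0) {a : g1} (ha : a ∈ U1) :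
    ω x a = 0 :=
  ((hU x a).mpr ⟨hx, ha⟩).1 a ha

theorem mem_left (hU : IsLagrangian ω U0 U1) {x : g0} (hx : ∀ b ∈ U1, ω x b = 0) : x ∈ U0 :=
  ((hU x 0).mp ⟨hx, fun _ _ => map_zero _⟩).1

theorem mem_right (hU : IsLagrangian ω U0 U1) {a : g1} (ha : ∀ y ∈ U0, ω y a = 0) : a ∈ U1 :=
  ((hU 0 a).mp ⟨fun _ _ => by simp, ha⟩).2

theorem s00_mem (hU : IsLagrangian ω U0 U1) (hs00 : ∀ x y a, ω (s00 x y) a = -ω y (br1 x a))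
    (hbr1 : ∀ x ∈ U0, ∀ a ∈ U1, br1 x a ∈ U1) {x : g0} (hx : x ∈ U0) {y : g0} (hy : y ∈ U0) :
    s00 x y ∈ U0 :=
  hU.mem_left fun b hb => by rw [hs00, hU.isotropic hy (hbr1 x hx b hb), neg_zero]

theorem s01_mem (hU : IsLagrangian ω U0 U1) (hs01 : ∀ x z b, ω z (s01 x b) = -ω (br0 x z) b)
    (hbr0 : ∀ x ∈ U0, ∀ y ∈ U0, br0 x y ∈ U0) {x : g0} (hx : x ∈ U0) {a : g1} (ha : a ∈ U1) :
    s01 x a ∈ U1 :=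
  hU.mem_right fun z hz => by rw [hs01, hU.isotropic (hbr0 x hx z hz) ha, neg_zero]

theorem s10_mem (hU : IsLagrangian ω U0 U1) (hs10 : ∀ a z y, ω z (s10 a y) = -ω y (br1 z a))
    (hbr1 : ∀ x ∈ U0, ∀ a ∈ U1, br1 x a ∈ U1) {a : g1} (ha : a ∈ U1) {x : g0} (hx : x ∈ U0) :
    s10 a x ∈ U1 :=
  hU.mem_right fun z hz => by rw [hs10, hU.isotropic hx (hbr1 z hz a ha), neg_zero]

end IsLagrangian

end DualMultiplication

end PreLie2

open PreLie2 Module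

theorem special_paraKahler_gives_manin_triple_general
    {K : Type*} [Field K]
    {g0 g1 : Type*} [AddCommGroup g0] [Module K g0]
    [AddCommGroup g1] [Module K g1]
    (δ : g1 →ₗ[K] g0) (br0 : g0 →ₗ[K] g0 →ₗ[K] g0) (br1 : g0 →ₗ[K] g1 →ₗ[K] g1)
    (hg : IsStrictLie2 K (⇑δ) (fun x y => br0 x y) (fun x a => br1 x a))
    (ω : g0 →ₗ[K] g1 →ₗ[K] K)
    (hnd0 : Function.Bijective fun x => ω x)
    (hnd1 : Function.Bijective fun a => ω.flip a)
    (hcl1 : ∀ x y a, ω (br0 x y) a + ω y (br1 x a) - ω x (br1 y a) = 0)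
    (hcl2 : ∀ a b, ω (δ a) b + ω (δ b) a = 0)
    -- the two Lagrangian strict sub-Lie 2-algebras `g⁺ = P0 ⊕ P1` and `g⁻ = N0 ⊕ N1`
    (P0 N0 : Submodule K g0) (P1 N1 : Submodule K g1)
    (hbrP0 : ∀ x ∈ P0, ∀ y ∈ P0, br0 x y ∈ P0)
    (hbrP1 : ∀ x ∈ P0, ∀ a ∈ P1, br1 x a ∈ P1)
    (hbrN0 : ∀ x ∈ N0, ∀ y ∈ N0, br0 x y ∈ N0)
    (hbrN1 : ∀ x ∈ N0, ∀ a ∈ N1, br1 x a ∈ N1)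
    (hLagP : ∀ x a, ((∀ b ∈ P1, ω x b = 0) ∧ ∀ y ∈ P0, ω y a = 0) ↔ (x ∈ P0 ∧ a ∈ P1))
    (hLagN : ∀ x a, ((∀ b ∈ N1, ω x b = 0) ∧ ∀ y ∈ N0, ω y a = 0) ↔ (x ∈ N0 ∧ a ∈ N1))
    -- the multiplications `∗` defined through `ω`
    (s00 : g0 →ₗ[K] g0 →ₗ[K] g0) (s01 : g0 →ₗ[K] g1 →ₗ[K] g1) (s10 : g1 →ₗ[K] g0 →ₗ[K] g1)
    (hs00 : ∀ x y a, ω (s00 x y) a = -ω y (br1 x a))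
    (hs01 : ∀ x z b, ω z (s01 x b) = -ω (br0 x z) b)
    (hs10 : ∀ a z y, ω z (s10 a y) = -ω y (br1 z a)) :
    -- (i) `(g0, g1, δ, ∗)` is a strict pre-Lie 2-algebra subadjacent to `(g0, g1, δ, [·,·])`
    (IsStrictPreLie2 K (⇑δ) (fun x y => s00 x y) (fun x a => s01 x a) (fun a x => s10 a x)
      ∧ (∀ x y, s00 x y - s00 y x = br0 x y)
      ∧ (∀ x a, s01 x a - s10 a x = br1 x a))
    -- (ii) `ω` is a nondegenerate invariant degree-1 bilinear form on `(g0, g1, δ, ∗)`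
    ∧ ((∀ a b, ω (δ a) b = -ω (δ b) a)
      ∧ (∀ x y a, ω (s00 x y) a = -ω y (s01 x a - s10 a x))
      ∧ (∀ x z b, ω z (s01 x b) = -ω (s00 x z - s00 z x) b)
      ∧ (∀ z a y, ω z (s10 a y) = -ω y (s01 z a - s10 a z)))
    -- (iii) `g⁺` and `g⁻` are isotropic strict sub-pre-Lie 2-algebras
    ∧ ((∀ x ∈ P0, ∀ y ∈ P0, s00 x y ∈ P0)
      ∧ (∀ x ∈ P0, ∀ a ∈ P1, s01 x a ∈ P1)
      ∧ (∀ a ∈ P1, ∀ x ∈ P0, s10 a x ∈ P1)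
      ∧ (∀ x ∈ N0, ∀ y ∈ N0, s00 x y ∈ N0)
      ∧ (∀ x ∈ N0, ∀ a ∈ N1, s01 x a ∈ N1)
      ∧ (∀ a ∈ N1, ∀ x ∈ N0, s10 a x ∈ N1)
      ∧ (∀ x ∈ P0, ∀ a ∈ P1, ω x a = 0)
      ∧ (∀ x ∈ N0, ∀ a ∈ N1, ω x a = 0)) := by
  have hω₀ : Function.Injective ω := hnd0.injective
  have hω₁ : Function.Injective ω.flip := hnd1.injective
  have hP : IsLagrangian ω P0 P1 := hLagP
  have hN : IsLagrangian ω N0 N1 := hLagN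
  have sub0 := s00_sub_s00_eq_br0 hω₀ hcl1 hs00
  have sub1 := s01_sub_s10_eq_br1 hg hω₁ hcl1 hs01 hs10
  refine ⟨⟨isStrictPreLie2_of_transpose hg hω₀ hω₁ hcl1 hcl2 hs00 hs01 hs10, sub0, sub1⟩,
    ⟨fun a b => eq_neg_of_add_eq_zero_left (hcl2 a b), ?_, ?_, ?_⟩,
    fun x hx y hy => hP.s00_mem hs00 hbrP1 hx hy, fun x hx a ha => hP.s01_mem hs01 hbrP0 hx ha,
    fun a ha x hx => hP.s10_mem hs10 hbrP1 ha hx, fun x hx y hy => hN.s00_mem hs00 hbrN1 hx hy,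
    fun x hx a ha => hN.s01_mem hs01 hbrN0 hx ha, fun a ha x hx => hN.s10_mem hs10 hbrN1 ha hx,
    fun x hx a ha => hP.isotropic hx ha, fun x hx a ha => hN.isotropic hx ha⟩
  · intro x y a; rw [sub1]; exact hs00 x y a
  · intro x z b; rw [sub0]; exact hs01 x z b
  · intro z a y; rw [sub1]; exact hs10 a z y

/-- a special para-Kähler strict Lie 2-algebra gives a Manin triple of strict
pre-Lie 2-algebras. -/
theorem special_paraKahler_gives_manin_triple
    {K : Type*} [Field K] [CharZero K]
    {g0 g1 : Type*} [AddCommGroup g0] [Module K g0] [FiniteDimensional K g0]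
    [AddCommGroup g1] [Module K g1] [FiniteDimensional K g1]
    (δ : g1 →ₗ[K] g0) (br0 : g0 →ₗ[K] g0 →ₗ[K] g0) (br1 : g0 →ₗ[K] g1 →ₗ[K] g1)
    (hg : IsStrictLie2 K (⇑δ) (fun x y => br0 x y) (fun x a => br1 x a))
    (ω : g0 →ₗ[K] g1 →ₗ[K] K)
    (hnd0 : Function.Bijective fun x => ω x)
    (hnd1 : Function.Bijective fun a => ω.flip a)
    (hcl1 : ∀ x y a, ω (br0 x y) a + ω y (br1 x a) - ω x (br1 y a) = 0)
    (hcl2 : ∀ a b, ω (δ a) b + ω (δ b) a = 0)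
    -- the two Lagrangian strict sub-Lie 2-algebras `g⁺ = P0 ⊕ P1` and `g⁻ = N0 ⊕ N1`
    (P0 N0 : Submodule K g0) (P1 N1 : Submodule K g1)
    (hcompl0 : IsCompl P0 N0) (hcompl1 : IsCompl P1 N1)
    (hδP : ∀ a ∈ P1, δ a ∈ P0) (hδN : ∀ a ∈ N1, δ a ∈ N0)
    (hbrP0 : ∀ x ∈ P0, ∀ y ∈ P0, br0 x y ∈ P0)
    (hbrP1 : ∀ x ∈ P0, ∀ a ∈ P1, br1 x a ∈ P1)
    (hbrN0 : ∀ x ∈ N0, ∀ y ∈ N0, br0 x y ∈ N0)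
    (hbrN1 : ∀ x ∈ N0, ∀ a ∈ N1, br1 x a ∈ N1)
    (hLagP : ∀ x a, ((∀ b ∈ P1, ω x b = 0) ∧ ∀ y ∈ P0, ω y a = 0) ↔ (x ∈ P0 ∧ a ∈ P1))
    (hLagN : ∀ x a, ((∀ b ∈ N1, ω x b = 0) ∧ ∀ y ∈ N0, ω y a = 0) ↔ (x ∈ N0 ∧ a ∈ N1))
    -- the multiplications `∗` defined through `ω`
    (s00 : g0 →ₗ[K] g0 →ₗ[K] g0) (s01 : g0 →ₗ[K] g1 →ₗ[K] g1) (s10 : g1 →ₗ[K] g0 →ₗ[K] g1)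
    (hs00 : ∀ x y a, ω (s00 x y) a = -ω y (br1 x a))
    (hs01 : ∀ x z b, ω z (s01 x b) = -ω (br0 x z) b)
    (hs10 : ∀ a z y, ω z (s10 a y) = -ω y (br1 z a)) :
    -- (i) `(g0, g1, δ, ∗)` is a strict pre-Lie 2-algebra subadjacent to `(g0, g1, δ, [·,·])`
    (IsStrictPreLie2 K (⇑δ) (fun x y => s00 x y) (fun x a => s01 x a) (fun a x => s10 a x)
      ∧ (∀ x y, s00 x y - s00 y x = br0 x y)
      ∧ (∀ x a, s01 x a - s10 a x = br1 x a))
    -- (ii) `ω` is a nondegenerate invariant degree-1 bilinear form on `(g0, g1, δ, ∗)`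
    ∧ ((∀ a b, ω (δ a) b = -ω (δ b) a)
      ∧ (∀ x y a, ω (s00 x y) a = -ω y (s01 x a - s10 a x))
      ∧ (∀ x z b, ω z (s01 x b) = -ω (s00 x z - s00 z x) b)
      ∧ (∀ z a y, ω z (s10 a y) = -ω y (s01 z a - s10 a z)))
    -- (iii) `g⁺` and `g⁻` are isotropic strict sub-pre-Lie 2-algebras
    ∧ ((∀ x ∈ P0, ∀ y ∈ P0, s00 x y ∈ P0)
      ∧ (∀ x ∈ P0, ∀ a ∈ P1, s01 x a ∈ P1)
      ∧ (∀ a ∈ P1, ∀ x ∈ P0, s10 a x ∈ P1)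
      ∧ (∀ x ∈ N0, ∀ y ∈ N0, s00 x y ∈ N0)
      ∧ (∀ x ∈ N0, ∀ a ∈ N1, s01 x a ∈ N1)
      ∧ (∀ a ∈ N1, ∀ x ∈ N0, s10 a x ∈ N1)
      ∧ (∀ x ∈ P0, ∀ a ∈ P1, ω x a = 0)
      ∧ (∀ x ∈ N0, ∀ a ∈ N1, ω x a = 0)) :=
  special_paraKahler_gives_manin_triple_general δ br0 br1 hg ω hnd0 hnd1 hcl1 hcl2 P0 N0 P1 N1 hbrP0
    hbrP1 hbrN0 hbrN1 hLagP hLagN s00 s01 s10 hs00 hs01 hs10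
end
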